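/- arXiv:1707.08204 — 11 statements merged into one kernel-verified Lean document; each statement's English description precedes it below -/
import Mathlib

section
/- Let n ≥ 1, let c_1, ..., c_n > 0 with each c_j of the form c_j = 2^{R_j/B} for R_j > 0 and B > 0, and let H_1 ≥ H_2 ≥ ... ≥ H_n > 0. Define b_j = Σ_{k=j}^{n} (c_k - 1) · (Π_{s=j}^{k-1} c_s) · H_k for j = 1, ..., n (with empty product equal to 1), and p_j = b_j - b_{j+1} (with b_{n+1} = 0). Then p_j > 0 for all j, and b_j = c_j · b_{j+1} + (c_j - 1) H_j for all j. -/
open Finset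

theorem noma_min_power_closed_form (n : ℕ) (hn : 1 ≤ n) (B : ℝ) (hB : 0 < B)
    (R c H : ℕ → ℝ)
    (hR : ∀ j ∈ Icc 1 n, 0 < R j)
    (hc : ∀ j ∈ Icc 1 n, c j = (2 : ℝ) ^ (R j / B))
    (hHpos : ∀ j ∈ Icc 1 n, 0 < H j)
    (hHmono : ∀ j k, 1 ≤ j → j ≤ k → k ≤ n → H k ≤ H j)
    (b p : ℕ → ℝ)
    (hb : ∀ j, b j = ∑ k ∈ Icc j n, (c k - 1) * (∏ s ∈ Ico j k, c s) * H k)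
    (hp : ∀ j, p j = b j - b (j + 1)) :
    (∀ j ∈ Icc 1 n, 0 < p j) ∧
    (∀ j ∈ Icc 1 n, b j = c j * b (j + 1) + (c j - 1) * H j) := by
  have hc1 : ∀ j ∈ Icc 1 n, 1 < c j := by
    intro j hj
    rw [hc j hj]
    have : 0 < R j / B := div_pos (hR j hj) hB
    calc (1:ℝ) = (2:ℝ) ^ (0:ℝ) := by norm_num
    _ < (2:ℝ) ^ (R j / B) := by
        apply Real.rpow_lt_rpow_left_iff (by norm_num : (1:ℝ) < 2) |>.mpr this
  have bnonneg : ∀ j, 1 ≤ j → 0 ≤ b j := by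
    intro j hj
    rw [hb j]
    apply Finset.sum_nonneg
    intro k hk
    simp only [mem_Icc] at hk
    have hk1 : k ∈ Icc 1 n := by simp only [mem_Icc]; omega
    have h1 : (0:ℝ) ≤ c k - 1 := by linarith [hc1 k hk1]
    have h2 : (0:ℝ) ≤ ∏ s ∈ Ico j k, c s := by
      apply Finset.prod_nonneg
      intro s hs
      simp only [mem_Ico] at hs
      have : s ∈ Icc 1 n := by simp only [mem_Icc]; omega
      linarith [hc1 s this]
    have h3 := (hHpos k hk1).le
    positivity
  have hrec : ∀ j ∈ Icc 1 n, b j = c j * b (j + 1) + (c j - 1) * H j := by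
    intro j hj
    simp only [mem_Icc] at hj
    rw [hb j, hb (j+1)]
    have hins : Icc j n = insert j (Icc (j+1) n) := by
      ext x; simp only [mem_Icc, mem_insert]; omega
    rw [hins, Finset.sum_insert (by simp)]
    rw [Finset.prod_Ico_eq_prod_range]
    simp only [Nat.sub_self, Finset.range_zero, Finset.prod_empty, mul_one]
    rw [Finset.mul_sum]
    have : ∀ k ∈ Icc (j+1) n,
        (c k - 1) * (∏ s ∈ Ico j k, c s) * H k
        = c j * ((c k - 1) * (∏ s ∈ Ico (j+1) k, c s) * H k) := by
      intro k hk
      simp only [mem_Icc] at hk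
      rw [Finset.prod_eq_prod_Ico_succ_bot (by omega : j < k)]
      ring
    rw [Finset.sum_congr rfl this]
    ring
  refine ⟨?_, hrec⟩
  intro j hj
  have hj' := hj
  simp only [mem_Icc] at hj'
  rw [hp j, hrec j hj]
  have h1 := hc1 j hj
  have h2 := hHpos j hj
  have h3 := bnonneg (j+1) (by omega)
  nlinarith
end

section
/- Under the hypotheses of the closed-form minimal power allocation (c_j = 2^{R_j/B} with common rate R_j = R for all j, and H_1 ≥ H_2 ≥ ... ≥ H_n > 0), the power sequence is strictly decreasing: p_{j-1} > p_j for all 2 ≤ j ≤ n. -/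
open Finset

theorem noma_min_power_strictly_decreasing (n : ℕ) (hn : 1 ≤ n) (B R : ℝ)
    (hB : 0 < B) (hR : 0 < R) (c H : ℕ → ℝ)
    (hc : ∀ j ∈ Icc 1 n, c j = (2 : ℝ) ^ (R / B))
    (hHpos : ∀ j ∈ Icc 1 n, 0 < H j)
    (hHmono : ∀ j k, 1 ≤ j → j ≤ k → k ≤ n → H k ≤ H j)
    (b p : ℕ → ℝ)
    (hb : ∀ j, b j = ∑ k ∈ Icc j n, (c k - 1) * (∏ s ∈ Ico j k, c s) * H k)
    (hp : ∀ j, p j = b j - b (j + 1)) :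
    ∀ j, 2 ≤ j → j ≤ n → p (j - 1) > p j := by
  set a : ℝ := (2 : ℝ) ^ (R / B) with hadef
  have ha : (1 : ℝ) < a := by
    exact (Real.one_lt_rpow_iff_of_pos (by norm_num)).2 (Or.inl ⟨by norm_num, div_pos hR hB⟩)
  -- recurrence
  have hrec : ∀ j, 1 ≤ j → j ≤ n → b j = (a - 1) * H j + a * b (j + 1) := by
    intro j hj1 hjn
    rw [hb j, hb (j + 1)]
    rw [Finset.Icc_add_one_left_eq_Ioc, ← Finset.Ioc_insert_left hjn, Finset.sum_insert (by simp)]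
    rw [Finset.Ico_self, Finset.prod_empty, mul_one, hc j (Finset.mem_Icc.2 ⟨hj1, hjn⟩)]
    rw [Finset.mul_sum]
    congr 1
    apply Finset.sum_congr rfl
    intro k hk
    rw [Finset.mem_Ioc] at hk
    rw [Finset.prod_eq_prod_Ico_succ_bot hk.1, hc j (Finset.mem_Icc.2 ⟨hj1, hjn⟩)]
    ring
  -- nonnegativity
  have hbnn : ∀ m, 1 ≤ m → 0 ≤ b m := by
    intro m hm
    rw [hb m]
    apply Finset.sum_nonneg
    intro k hk
    rw [Finset.mem_Icc] at hk
    have hck : c k = a := hc k (Finset.mem_Icc.2 ⟨le_trans hm hk.1, hk.2⟩)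
    have hHk : 0 < H k := hHpos k (Finset.mem_Icc.2 ⟨le_trans hm hk.1, hk.2⟩)
    have hprod : 0 ≤ ∏ s ∈ Ico m k, c s := by
      apply Finset.prod_nonneg
      intro s hs
      rw [Finset.mem_Ico] at hs
      rw [hc s (Finset.mem_Icc.2 ⟨le_trans hm hs.1, le_trans (Nat.le_of_lt_succ (Nat.lt_succ_of_lt hs.2)) hk.2⟩)]
      linarith
    have : (0:ℝ) ≤ c k - 1 := by rw [hck]; linarith
    positivity
  intro j hj2 hjn
  have hjeq : j - 1 + 1 = j := by omega
  have h1 := hrec (j - 1) (by omega) (by omega)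
  rw [hjeq] at h1
  have h2 := hrec j (by omega) hjn
  have hb1 := hbnn (j + 1) (by omega)
  have hH : 0 < H j := hHpos j (Finset.mem_Icc.2 ⟨by omega, hjn⟩)
  have hHm : H j ≤ H (j - 1) := hHmono (j - 1) j (by omega) (by omega) hjn
  rw [hp (j - 1), hp j, hjeq, h1, h2]
  nlinarith [mul_nonneg (by linarith : (0:ℝ) ≤ a - 1) (sub_nonneg.2 hHm),
    mul_pos (mul_pos (by linarith : (0:ℝ) < a - 1) (by linarith : (0:ℝ) < a - 1)) hH,
    mul_nonneg (mul_nonneg (by linarith : (0:ℝ) ≤ a - 1) (by linarith : (0:ℝ) ≤ a - 1)) hb1]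
end

section
/- If p_j ≥ (c_j - 1)(Σ_{k=j+1}^n p_k + H_j) holds with equality for all j = 1, ..., n, where c_j > 1 and H_j > 0, then the total power equals Σ_{j=1}^n p_j = Σ_{k=1}^n (c_k - 1) · (Π_{s=1}^{k-1} c_s) · H_k. -/
open Finset

lemma noma_aux (n : ℕ) (c H p : ℕ → ℝ)
    (heq : ∀ j ∈ Icc 1 n, p j = (c j - 1) * (∑ k ∈ Icc (j + 1) n, p k + H j)) :
    ∀ m j, j + m = n + 1 → 1 ≤ j →
      ∑ k ∈ Icc j n, p k = ∑ k ∈ Icc j n, (c k - 1) * (∏ s ∈ Ico j k, c s) * H k := by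
  intro m
  induction m with
  | zero =>
    intro j hj _
    have : n < j := by omega
    rw [Icc_eq_empty_of_lt this]
    simp
  | succ m ih =>
    intro j hj h1
    have hjn : j ≤ n := by omega
    have hins : Icc j n = insert j (Icc (j+1) n) := by
      ext x; simp [Finset.mem_Icc]; omega
    have hnot : j ∉ Icc (j+1) n := by simp
    have hS := ih (j+1) (by omega) (by omega)
    rw [hins, Finset.sum_insert hnot, Finset.sum_insert hnot,
      heq j (by simp [h1, hjn]), hS]
    have hprod : ∀ k ∈ Icc (j+1) n, (c k - 1) * (∏ s ∈ Ico j k, c s) * H k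
        = c j * ((c k - 1) * (∏ s ∈ Ico (j+1) k, c s) * H k) := by
      intro k hk
      have : j < k := by simp at hk; omega
      rw [Finset.prod_eq_prod_Ico_succ_bot this]
      ring
    rw [Finset.sum_congr rfl hprod, ← Finset.mul_sum]
    simp
    ring

theorem noma_min_total_power (n : ℕ) (c H p : ℕ → ℝ)
    (hc : ∀ j ∈ Icc 1 n, 1 < c j)
    (hH : ∀ j ∈ Icc 1 n, 0 < H j)
    (heq : ∀ j ∈ Icc 1 n, p j = (c j - 1) * (∑ k ∈ Icc (j + 1) n, p k + H j)) :
    ∑ j ∈ Icc 1 n, p j = ∑ k ∈ Icc 1 n, (c k - 1) * (∏ s ∈ Ico 1 k, c s) * H k :=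
  noma_aux n c H p heq n 1 (by omega) le_rfl
end

section
/- Let n ≥ 1, H_1 ≥ H_2 ≥ ... ≥ H_n > 0, and B > 0. The function F(p_1, ..., p_n) = -Σ_{j=1}^n B log₂(1 + p_j / (Σ_{k=j+1}^n p_k + H_j)) is convex on the set {p ∈ ℝⁿ : p ≥ 0}. -/
/-!
Write `S_j = ∑_{k ≥ j} p_k`, so that the `j`-th rate is `log (S_j + H_j) - log (S_{j+1} + H_j)`
(up to the factor `B / log 2`). Regrouping the sum so that terms with the same tail sum meet gives
`log (S_1 + H_1) - log H_n + ∑_{j < n} (log (S_{j+1} + H_{j+1}) - log (S_{j+1} + H_j))`.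
Since `H_{j+1} ≤ H_j`, every summand is `x ↦ log (x + b) - log (x + a)` with `0 < b ≤ a`, a concave
function (its derivative `1/(x+b) - 1/(x+a)` decreases), evaluated at a linear form in `p`.
Hence the sum rate is concave and its negative convex.
-/

open Finset Real

theorem ConcaveOn.sum {𝕜 E β ι : Type*} [Semiring 𝕜] [PartialOrder 𝕜] [AddCommMonoid E]
    [AddCommMonoid β] [PartialOrder β] [IsOrderedAddMonoid β] [SMul 𝕜 E] [Module 𝕜 β]
    {s : Set E} (hs : Convex 𝕜 s) {t : Finset ι} {f : ι → E → β}
    (hf : ∀ i ∈ t, ConcaveOn 𝕜 s (f i)) : ConcaveOn 𝕜 s fun x => ∑ i ∈ t, f i x := by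
  simp_rw [← Finset.sum_apply]
  exact Finset.sum_induction f (ConcaveOn 𝕜 s) (fun _ _ => ConcaveOn.add)
    (concaveOn_const 0 hs) hf

theorem ConcaveOn.comp_sum_apply {ι : Type*} {g : ℝ → ℝ} (hg : ConcaveOn ℝ (Set.Ici 0) g)
    (t : Finset ι) : ConcaveOn ℝ {p : ι → ℝ | ∀ i, 0 ≤ p i} fun p => g (∑ i ∈ t, p i) :=
  ((hg.comp_linearMap (∑ i ∈ t, LinearMap.proj i)).subset
    (fun p (hp : ∀ i, 0 ≤ p i) => Set.mem_preimage.2 <| by simpa using sum_nonneg fun i _ => hp i)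
    (convex_Ici 0)).congr fun p _ => by simp

theorem concaveOn_log_add {a : ℝ} (ha : 0 < a) :
    ConcaveOn ℝ (Set.Ici 0) fun x => log (x + a) :=
  ((strictConcaveOn_log_Ioi.concaveOn.translate_right a).subset
    (fun x (hx : 0 ≤ x) => show 0 < a + x by linarith) (convex_Ici 0)).congr
    fun x _ => by simp [add_comm]

theorem concaveOn_log_add_sub_log_add {a b : ℝ} (hb : 0 < b) (hba : b ≤ a) :
    ConcaveOn ℝ (Set.Ici 0) fun x => log (x + b) - log (x + a) := by
  have hpos : ∀ x ∈ Set.Ici (0 : ℝ), 0 < x + b ∧ 0 < x + a := fun x (hx : 0 ≤ x) =>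
    ⟨by linarith, by linarith⟩
  have hderiv : ∀ x ∈ Set.Ici (0 : ℝ),
      HasDerivAt (fun x => log (x + b) - log (x + a)) ((x + b)⁻¹ - (x + a)⁻¹) x := by
    intro x hx
    simpa using (((hasDerivAt_id' x).add_const b).log (hpos x hx).1.ne').fun_sub
      (((hasDerivAt_id' x).add_const a).log (hpos x hx).2.ne')
  have hderiv2 : ∀ x ∈ Set.Ici (0 : ℝ), HasDerivAt (fun x => (x + b)⁻¹ - (x + a)⁻¹)
      (((x + a) ^ 2)⁻¹ - ((x + b) ^ 2)⁻¹) x := by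
    intro x hx
    exact ((((hasDerivAt_id' x).add_const b).fun_inv (hpos x hx).1.ne').fun_sub
      (((hasDerivAt_id' x).add_const a).fun_inv (hpos x hx).2.ne')).congr_deriv (by ring)
  refine concaveOn_of_hasDerivWithinAt2_nonpos (convex_Ici 0)
    (fun x hx => (hderiv x hx).continuousAt.continuousWithinAt)
    (fun x hx => (hderiv x (interior_subset hx)).hasDerivWithinAt)
    (fun x hx => (hderiv2 x (interior_subset hx)).hasDerivWithinAt) fun x hx => ?_
  have := (hpos x (interior_subset hx)).1
  exact sub_nonpos.2 (by gcongr)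

theorem Finset.sum_Icc_sub_eq_sub_add_sum_Ico {M : Type*} [AddCommGroup M] (a b : ℕ → M) {n : ℕ}
    (hn : 1 ≤ n) :
    ∑ j ∈ Icc 1 n, (a j - b j) = a 1 - b n + ∑ j ∈ Ico 1 n, (a (j + 1) - b j) := by
  induction n, hn using Nat.le_induction with
  | base => simp
  | succ n hn ih =>
    rw [sum_Icc_succ_top (by omega), ih, sum_Ico_succ_top hn]
    abel

theorem logb_one_add_div_sum_Icc_add_one {p : ℕ → ℝ} (hp : ∀ k, 0 ≤ p k) {j n : ℕ} (hjn : j ≤ n)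
    {h : ℝ} (hh : 0 < h) (b : ℝ) :
    logb b (1 + p j / (∑ k ∈ Icc (j + 1) n, p k + h)) =
      (log (∑ k ∈ Icc j n, p k + h) - log (∑ k ∈ Icc (j + 1) n, p k + h)) / log b := by
  have htail : 0 < ∑ k ∈ Icc (j + 1) n, p k + h := by
    have := sum_nonneg fun k (_ : k ∈ Icc (j + 1) n) => hp k
    linarith
  rw [← insert_Icc_add_one_left_eq_Icc hjn, sum_insert (by simp), add_assoc,
    ← log_div (by linarith [hp j]) htail.ne', logb, add_div, div_self htail.ne', add_comm]

theorem noma_neg_sum_rate_convex (n : ℕ) (hn : 1 ≤ n) (B : ℝ) (hB : 0 < B)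
    (H : ℕ → ℝ)
    (hHpos : ∀ j ∈ Icc 1 n, 0 < H j)
    (hHmono : ∀ j k, 1 ≤ j → j ≤ k → k ≤ n → H k ≤ H j) :
    ConvexOn ℝ {p : ℕ → ℝ | ∀ j, 0 ≤ p j}
      (fun p => -∑ j ∈ Icc 1 n,
        B * Real.logb 2 (1 + p j / (∑ k ∈ Icc (j + 1) n, p k + H j))) := by
  have horthant : Convex ℝ {p : ℕ → ℝ | ∀ j, 0 ≤ p j} := convex_Ici 0
  have hG : ConcaveOn ℝ {p : ℕ → ℝ | ∀ j, 0 ≤ p j} fun p =>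
      log (∑ k ∈ Icc 1 n, p k + H 1) - log (H n) + ∑ j ∈ Ico 1 n,
        (log (∑ k ∈ Icc (j + 1) n, p k + H (j + 1)) - log (∑ k ∈ Icc (j + 1) n, p k + H j)) := by
    refine (((concaveOn_log_add (hHpos 1 ?_)).comp_sum_apply _).add
      (concaveOn_const _ horthant)).add (ConcaveOn.sum horthant fun j hj => ?_)
    · simpa using hn
    rw [mem_Ico] at hj
    exact (concaveOn_log_add_sub_log_add (hHpos _ (mem_Icc.2 ⟨by omega, by omega⟩))
      (hHmono _ _ hj.1 (by omega) (by omega))).comp_sum_apply _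
  refine (hG.smul (div_nonneg hB.le (log_nonneg one_le_two))).neg.congr fun p hp => ?_
  simp only [Pi.neg_apply, smul_eq_mul]
  rw [← mul_sum, sum_congr rfl fun j hj =>
    logb_one_add_div_sum_Icc_add_one hp (mem_Icc.1 hj).2 (hHpos j hj) 2, ← sum_div,
    sum_Icc_sub_eq_sub_add_sum_Ico (fun j => log (∑ k ∈ Icc j n, p k + H j))
      (fun j => log (∑ k ∈ Icc (j + 1) n, p k + H j)) hn]
  rw [Icc_eq_empty_of_lt n.lt_add_one, sum_empty, zero_add]
  ring
end

section
/- Let A be an n×n symmetric matrix with entries A_{jl} = a_{min(j,l)} for a sequence a_1 ≤ a_2 ≤ ... ≤ a_n with a_1 ≥ 0. Then A is positive semidefinite. -/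
/-!
Writing `f m = f 0 + ∑_{k < m} (f (k + 1) - f k)`, the matrix `(f (min j l))_{j,l}` is `f 0` times the
all-ones matrix plus the sum over `k` of `f (k + 1) - f k` times the rank-one matrix `v vᵀ` of the
indicator vector `v` of `{i | k < i}`. For monotone `f` with `f 0 ≥ 0` all coefficients are
nonnegative, so the matrix is a nonnegative combination of positive semidefinite matrices.
-/

open Matrix Finset

lemma indicator_lt_val_mul_indicator_lt_val {R : Type*} [MulZeroOneClass R] {n : ℕ} (k : ℕ)
    (j l : Fin n) :
    {i : Fin n | k < i}.indicator 1 j * {i : Fin n | k < i}.indicator 1 l =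
      if k < min (j : ℕ) l then (1 : R) else 0 := by
  simp only [Set.indicator_apply, Set.mem_ofPred_eq, Pi.one_apply, lt_min_iff]
  split_ifs <;> simp_all

namespace Matrix

lemma of_apply_min_eq_add_sum {R : Type*} [CommRing R] (n : ℕ) (f : ℕ → R) :
    (of fun j l : Fin n => f (min j l : ℕ)) =
      f 0 • vecMulVec 1 1 + ∑ k ∈ range n,
        (f (k + 1) - f k) • vecMulVec ({i : Fin n | k < i}.indicator 1)
          ({i : Fin n | k < i}.indicator 1) := by
  ext j l
  have hfilter : (range n).filter (· < min (j : ℕ) l) = range (min j l) := by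
    ext k; simp only [mem_filter, mem_range, lt_min_iff]; omega
  simp only [of_apply, add_apply, smul_apply, vecMulVec_apply, sum_apply, Pi.one_apply,
    indicator_lt_val_mul_indicator_lt_val, smul_eq_mul, mul_one, mul_ite, mul_zero, ← sum_filter,
    hfilter, sum_range_sub]
  ring

lemma posSemidef_of_apply_min {n : ℕ} {f : ℕ → ℝ} (hf : Monotone f) (hf0 : 0 ≤ f 0) :
    (of fun j l : Fin n => f (min j l : ℕ)).PosSemidef := by
  have hrank : ∀ v : Fin n → ℝ, (vecMulVec v v).PosSemidef := posSemidef_vecMulVec_self_star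
  rw [of_apply_min_eq_add_sum]
  exact ((hrank 1).smul hf0).add <| posSemidef_sum _ fun k _ =>
    (hrank _).smul (sub_nonneg.2 (hf k.le_succ))

end Matrix

theorem min_structured_matrix_posSemidef (n : ℕ) (a : Fin n → ℝ)
    (ha0 : ∀ h : 0 < n, 0 ≤ a ⟨0, h⟩) (hmono : Monotone a)
    (A : Matrix (Fin n) (Fin n) ℝ) (hA : ∀ j l, A j l = a (min j l)) :
    A.PosSemidef := by
  cases n with
  | zero => exact Subsingleton.elim A 0 ▸ PosSemidef.zero
  | succ m =>
    have hA' : A = of fun j l : Fin (m + 1) => a (Fin.clamp (min j l : ℕ) m) := by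
      ext j l
      rw [hA, of_apply, Fin.clamp]
      exact congrArg a (Fin.ext (min_eq_left (by omega)).symm)
    rw [hA']
    exact posSemidef_of_apply_min (f := fun i => a (Fin.clamp i m))
      (fun i k h => hmono (Fin.mk_le_mk.2 (min_le_min_right m h))) (ha0 m.succ_pos)
end

section
/- Let A be the n×n matrix with A_{jl} = a_{min(j,l)}. Then the t-th leading principal minor of A equals a_1 · Π_{l=2}^t (a_l - a_{l-1}). -/
/-!
Subtracting from each row of `A_{jl} = a_{min(j,l)}` the row above it leaves an upper
triangular matrix: row `j` becomes `a_{min(j,l)} - a_{min(j-1,l)}`, which vanishes for `l < j`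
and equals `a_j - a_{j-1}` on the diagonal. The determinant is the product of these pivots.
-/

open Finset Matrix

variable {R : Type*} [CommRing R]

def minRowDiff (f : ℕ → R) (n : ℕ) : Matrix (Fin (n + 1)) (Fin (n + 1)) R :=
  of fun j l => if (j : ℕ) = 0 then f 0 else f (min (j : ℕ) l) - f (min ((j : ℕ) - 1) l)

theorem det_of_min_eq_det_minRowDiff (f : ℕ → R) (n : ℕ) :
    (of fun j l : Fin (n + 1) => f (min (j : ℕ) l)).det = (minRowDiff f n).det :=
  det_eq_of_forall_row_eq_smul_add_pred (fun _ => 1) (fun _ => by simp [minRowDiff])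
    (fun _ _ => by simp [minRowDiff])

theorem minRowDiff_isUpperTriangular (f : ℕ → R) (n : ℕ) :
    (minRowDiff f n).IsUpperTriangular := by
  intro j l (hlj : (l : ℕ) < j)
  simp only [minRowDiff, of_apply, if_neg (Nat.ne_zero_of_lt hlj), min_eq_right hlj.le,
    min_eq_right (Nat.le_sub_one_of_lt hlj), sub_self]

theorem det_minRowDiff (f : ℕ → R) (n : ℕ) :
    (minRowDiff f n).det = f 0 * ∏ i : Fin n, (f (i + 1) - f i) := by
  rw [det_of_isUpperTriangular (minRowDiff_isUpperTriangular f n), Fin.prod_univ_succ]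
  simp [minRowDiff]

theorem det_of_min (f : ℕ → R) (n : ℕ) :
    (of fun j l : Fin (n + 1) => f (min (j : ℕ) l)).det =
      f 0 * ∏ i : Fin n, (f (i + 1) - f i) := by
  rw [det_of_min_eq_det_minRowDiff, det_minRowDiff]

theorem min_structured_matrix_det (t : ℕ) (ht : 1 ≤ t) (a : ℕ → ℝ) :
    (Matrix.of fun j l : Fin t => a (min (j : ℕ) (l : ℕ) + 1)).det
      = a 1 * ∏ l ∈ Icc 2 t, (a l - a (l - 1)) := by
  obtain ⟨n, rfl⟩ := Nat.exists_eq_add_of_le' ht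
  rw [det_of_min (fun k => a (k + 1)),
    Fin.prod_univ_eq_prod_range (fun i => a (i + 1 + 1) - a (i + 1)), ← Ico_add_one_right_eq_Icc, prod_Ico_eq_prod_range]
  simp [add_comm, add_left_comm]
end

section
/- Let n ≥ 1, constants c_j = 2^{R_j/B} > 1 for j = 1,...,n, H_1 ≥ ... ≥ H_n > 0, and total power budget q > 0. The feasibility region {p ≥ 0 : Σ_j p_j = q, and p_j ≥ (c_j - 1)(Σ_{k=j+1}^n p_k + H_j) for all j} is nonempty if and only if Σ_{j=1}^n (c_j - 1) · (Π_{s=1}^{j-1} c_s) · H_j ≤ q. -/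
open Finset

private lemma sum_Icc_bot {M : Type*} [AddCommMonoid M] (f : ℕ → M) {j n : ℕ} (h : j ≤ n) :
    ∑ k ∈ Icc j n, f k = f j + ∑ k ∈ Icc (j+1) n, f k := by
  have hins : Icc j n = insert j (Icc (j+1) n) := by
    ext x; simp only [Finset.mem_insert, Finset.mem_Icc]; omega
  rw [hins, Finset.sum_insert (by simp [Finset.mem_Icc])]

private lemma tele_Icc (f : ℕ → ℝ) {a b : ℕ} (h : a ≤ b) :
    ∑ k ∈ Icc a b, (f k - f (k+1)) = f a - f (b+1) := by
  induction b, h using Nat.le_induction with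
  | base => simp
  | succ m hm ih =>
      rw [Finset.sum_Icc_succ_top (by omega), ih]
      ring

theorem noma_single_cell_feasibility (n : ℕ) (hn : 1 ≤ n) (B : ℝ) (hB : 0 < B)
    (R c H : ℕ → ℝ) (q : ℝ) (hq : 0 < q)
    (hR : ∀ j ∈ Icc 1 n, 0 < R j)
    (hc : ∀ j ∈ Icc 1 n, c j = (2 : ℝ) ^ (R j / B))
    (hHpos : ∀ j ∈ Icc 1 n, 0 < H j)
    (hHmono : ∀ j k, 1 ≤ j → j ≤ k → k ≤ n → H k ≤ H j) :
    (∃ p : ℕ → ℝ, (∀ j ∈ Icc 1 n, 0 ≤ p j) ∧ (∑ j ∈ Icc 1 n, p j = q) ∧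
        ∀ j ∈ Icc 1 n, p j ≥ (c j - 1) * (∑ k ∈ Icc (j + 1) n, p k + H j))
      ↔ ∑ j ∈ Icc 1 n, (c j - 1) * (∏ s ∈ Ico 1 j, c s) * H j ≤ q := by
  -- c j > 1 on Icc 1 n
  have hc1 : ∀ j ∈ Icc 1 n, 1 < c j := by
    intro j hj
    rw [hc j hj]
    have hpos : 0 < R j / B := div_pos (hR j hj) hB
    exact (Real.one_lt_rpow_iff_of_pos (by norm_num)).mpr (Or.inl ⟨one_lt_two, hpos⟩)
  set T : ℕ → ℝ := fun j => ∑ k ∈ Icc j n, (c k - 1) * (∏ s ∈ Ico j k, c s) * H k with hT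
  have hTzero : ∀ j, n < j → T j = 0 := by
    intro j hj
    simp [hT, Finset.Icc_eq_empty_of_lt hj]
  have hTrec : ∀ j, 1 ≤ j → j ≤ n → T j = c j * T (j+1) + (c j - 1) * H j := by
    intro j h1 h2
    have : T j = (c j - 1) * (∏ s ∈ Ico j j, c s) * H j
        + ∑ k ∈ Icc (j+1) n, (c k - 1) * (∏ s ∈ Ico j k, c s) * H k :=
      sum_Icc_bot _ h2
    rw [this, Finset.Ico_self, Finset.prod_empty]
    have hsum : ∑ k ∈ Icc (j+1) n, (c k - 1) * (∏ s ∈ Ico j k, c s) * H k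
        = c j * ∑ k ∈ Icc (j+1) n, (c k - 1) * (∏ s ∈ Ico (j+1) k, c s) * H k := by
      rw [Finset.mul_sum]
      apply Finset.sum_congr rfl
      intro k hk
      have hk' := Finset.mem_Icc.mp hk
      have hins : Ico j k = insert j (Ico (j+1) k) := by
        ext x; simp only [Finset.mem_insert, Finset.mem_Ico]; omega
      rw [hins, Finset.prod_insert (by simp [Finset.mem_Ico])]
      ring
    rw [hsum]; ring
  have hTnn : ∀ j, 1 ≤ j → 0 ≤ T j := by
    intro j h1
    apply Finset.sum_nonneg
    intro k hk
    have hk' := Finset.mem_Icc.mp hk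
    have hck : 1 < c k := hc1 k (Finset.mem_Icc.mpr ⟨by omega, hk'.2⟩)
    have hprod : 0 ≤ ∏ s ∈ Ico j k, c s := by
      apply Finset.prod_nonneg
      intro s hs
      have hs' := Finset.mem_Ico.mp hs
      have := hc1 s (Finset.mem_Icc.mpr ⟨by omega, by omega⟩)
      linarith
    have hH : 0 < H k := hHpos k (Finset.mem_Icc.mpr ⟨by omega, hk'.2⟩)
    have : 0 ≤ c k - 1 := by linarith
    positivity
  constructor
  · rintro ⟨p, hp0, hps, hpc⟩
    set S : ℕ → ℝ := fun j => ∑ k ∈ Icc j n, p k with hS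
    have key : ∀ d, d ≤ n → T (n+1-d) ≤ S (n+1-d) := by
      intro d
      induction d with
      | zero =>
          intro _
          have h1 : T (n+1) = 0 := hTzero _ (by omega)
          have h2 : S (n+1) = 0 := by
            have he : Icc (n+1) n = ∅ := Finset.Icc_eq_empty_of_lt (by omega)
            simp [hS, he]
          simp [h1, h2]
      | succ d ih =>
          intro hd
          have ih' := ih (by omega)
          set j := n - d with hj
          have hj1 : 1 ≤ j := by omega
          have hjn : j ≤ n := by omega
          have e1 : n + 1 - (d+1) = j := by omega
          have e2 : n + 1 - d = j + 1 := by omega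
          rw [e1]
          rw [e2] at ih'
          have hjm : j ∈ Icc 1 n := Finset.mem_Icc.mpr ⟨hj1, hjn⟩
          have hcon := hpc j hjm
          have hcj := hc1 j hjm
          have hSsplit : S j = p j + S (j+1) := sum_Icc_bot p hjn
          have hTr := hTrec j hj1 hjn
          have : (c j - 1) * (S (j+1) + H j) ≤ p j := hcon
          nlinarith [this, ih', hSsplit, hTr]
    have := key n (le_refl n)
    have e : n + 1 - n = 1 := by omega
    rw [e] at this
    exact le_of_le_of_eq this hps
  · intro hle
    refine ⟨fun j => if j = 1 then q - T 2 else T j - T (j+1), ?_, ?_, ?_⟩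
    · intro j hj
      have hj' := Finset.mem_Icc.mp hj
      by_cases h1 : j = 1
      · subst h1
        beta_reduce
        rw [if_pos rfl]
        have hTr := hTrec 1 (le_refl 1) hn
        have hT2 : 0 ≤ T 2 := hTnn 2 (by omega)
        have hH1 : 0 < H 1 := hHpos 1 (Finset.mem_Icc.mpr ⟨le_refl 1, hn⟩)
        have hc1' := hc1 1 (Finset.mem_Icc.mpr ⟨le_refl 1, hn⟩)
        nlinarith [hle, hTr]
      · simp only [if_neg h1]
        have hTr := hTrec j hj'.1 hj'.2
        have hTn : 0 ≤ T (j+1) := hTnn (j+1) (by omega)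
        have hH : 0 < H j := hHpos j hj
        have hcj := hc1 j hj
        nlinarith [hTr]
    · have htail : ∑ k ∈ Icc 2 n, (if k = 1 then q - T 2 else T k - T (k+1)) = T 2 := by
        have hcg : ∑ k ∈ Icc 2 n, (if k = 1 then q - T 2 else T k - T (k+1))
            = ∑ k ∈ Icc 2 n, (T k - T (k+1)) := by
          apply Finset.sum_congr rfl
          intro k hk
          have hk' := Finset.mem_Icc.mp hk
          rw [if_neg (by omega)]
        rw [hcg]
        by_cases h2n : 2 ≤ n
        · rw [tele_Icc T h2n, hTzero (n+1) (by omega)]; ring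
        · have hn1 : n = 1 := by omega
          subst hn1
          rw [show Icc 2 1 = ∅ from Finset.Icc_eq_empty_of_lt (by omega),
            Finset.sum_empty, hTzero 2 (by omega)]
      rw [sum_Icc_bot _ hn]
      beta_reduce
      rw [if_pos rfl, htail]
      ring
    · intro j hj
      have hj' := Finset.mem_Icc.mp hj
      have htail : ∑ k ∈ Icc (j+1) n, (if k = 1 then q - T 2 else T k - T (k+1)) = T (j+1) := by
        have hcg : ∑ k ∈ Icc (j+1) n, (if k = 1 then q - T 2 else T k - T (k+1))
            = ∑ k ∈ Icc (j+1) n, (T k - T (k+1)) := by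
          apply Finset.sum_congr rfl
          intro k hk
          have hk' := Finset.mem_Icc.mp hk
          rw [if_neg (by omega)]
        rw [hcg]
        by_cases hjn : j + 1 ≤ n
        · rw [tele_Icc T hjn, hTzero (n+1) (by omega)]; ring
        · rw [Finset.Icc_eq_empty_of_lt (by omega), Finset.sum_empty,
            hTzero (j+1) (by omega)]
      rw [htail]
      by_cases h1 : j = 1
      · subst h1
        beta_reduce
        rw [if_pos rfl]
        have hTr := hTrec 1 (le_refl 1) hn
        nlinarith [hle, hTr]
      · simp only [if_neg h1]
        have hTr := hTrec j hj'.1 hj'.2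
        nlinarith [hTr]
end

section
/- Under the hypotheses above, with b_{j+1} = q/(Π_{s=1}^j c_s) - Σ_{k=1}^j (c_k - 1) H_k / (Π_{l=k}^j c_l) and p_j = b_j - b_{j+1} for j < n, p_n = b_n: the power of user n satisfies p_n = q / (Π_{s=1}^{n-1} c_s) - Σ_{k=1}^{n-1} (c_k - 1) H_k / (Π_{l=k}^{n-1} c_l), and p_n ≥ 0 whenever q ≥ Σ_{j=1}^n (c_j - 1)(Π_{s=1}^{j-1} c_s) H_j. -/
open Finset

theorem noma_strongest_user_power (n : ℕ) (hn : 2 ≤ n) (c H : ℕ → ℝ) (q : ℝ)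
    (hc : ∀ j ∈ Icc 1 n, 1 < c j)
    (hHpos : ∀ j ∈ Icc 1 n, 0 < H j)
    (hHmono : ∀ j k, 1 ≤ j → j ≤ k → k ≤ n → H k ≤ H j)
    (hq : ∑ j ∈ Icc 1 n, (c j - 1) * (∏ s ∈ Ico 1 j, c s) * H j ≤ q)
    (b p : ℕ → ℝ) (hb1 : b 1 = q)
    (hb : ∀ j, 1 ≤ j → j ≤ n - 1 →
      b (j + 1) = q / (∏ s ∈ Icc 1 j, c s)
        - ∑ k ∈ Icc 1 j, (c k - 1) * H k / (∏ l ∈ Icc k j, c l))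
    (hpj : ∀ j, 1 ≤ j → j < n → p j = b j - b (j + 1))
    (hpn : p n = b n) :
    p n = q / (∏ s ∈ Icc 1 (n - 1), c s)
        - ∑ k ∈ Icc 1 (n - 1), (c k - 1) * H k / (∏ l ∈ Icc k (n - 1), c l)
      ∧ 0 ≤ p n := by
  have hn1 : 1 ≤ n - 1 := by omega
  have hsub : n - 1 + 1 = n := by omega
  have hbn := hb (n - 1) hn1 le_rfl
  rw [hsub] at hbn
  have hmain : p n = q / (∏ s ∈ Icc 1 (n - 1), c s)
        - ∑ k ∈ Icc 1 (n - 1), (c k - 1) * H k / (∏ l ∈ Icc k (n - 1), c l) := by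
    rw [hpn, hbn]
  refine ⟨hmain, ?_⟩
  rw [hmain]
  have hcpos : ∀ j ∈ Icc 1 n, (0:ℝ) < c j := fun j hj => lt_trans one_pos (hc j hj)
  have hP : (0:ℝ) < ∏ s ∈ Icc 1 (n - 1), c s := by
    apply Finset.prod_pos
    intro i hi
    exact hcpos i (Icc_subset_Icc_right (by omega) hi)
  rw [sub_nonneg, le_div_iff₀ hP]
  have key : ∀ k ∈ Icc 1 (n - 1),
      (c k - 1) * H k / (∏ l ∈ Icc k (n - 1), c l) * (∏ s ∈ Icc 1 (n - 1), c s)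
        = (c k - 1) * (∏ s ∈ Ico 1 k, c s) * H k := by
    intro k hk
    obtain ⟨hk1, hk2⟩ := mem_Icc.mp hk
    have h1 : Icc k (n - 1) = Ico k n := by rw [← hsub]; exact (Finset.Ico_add_one_right_eq_Icc _ _).symm
    have h2 : Icc 1 (n - 1) = Ico 1 n := by rw [← hsub]; exact (Finset.Ico_add_one_right_eq_Icc _ _).symm
    rw [h1, h2, ← Finset.prod_Ico_consecutive c hk1 (by omega : k ≤ n)]
    have hA : (0:ℝ) < ∏ l ∈ Ico k n, c l := by
      apply Finset.prod_pos
      intro i hi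
      refine hcpos i ?_
      simp only [mem_Ico] at hi
      simp only [mem_Icc]
      omega
    field_simp
  calc (∑ k ∈ Icc 1 (n - 1), (c k - 1) * H k / (∏ l ∈ Icc k (n - 1), c l))
        * (∏ s ∈ Icc 1 (n - 1), c s)
      = ∑ k ∈ Icc 1 (n - 1), (c k - 1) * (∏ s ∈ Ico 1 k, c s) * H k := by
        rw [Finset.sum_mul]; exact Finset.sum_congr rfl key
    _ ≤ ∑ j ∈ Icc 1 n, (c j - 1) * (∏ s ∈ Ico 1 j, c s) * H j := by
        apply Finset.sum_le_sum_of_subset_of_nonneg (Icc_subset_Icc_right (by omega))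
        intro j hj _
        have hj' := mem_Icc.mp hj
        have h1 : 0 ≤ c j - 1 := by linarith [hc j hj]
        have h2 : (0:ℝ) ≤ ∏ s ∈ Ico 1 j, c s := by
          apply Finset.prod_nonneg
          intro i hi
          simp only [mem_Ico] at hi
          exact le_of_lt (hcpos i (mem_Icc.mpr ⟨hi.1, by omega⟩))
        exact mul_nonneg (mul_nonneg h1 h2) (le_of_lt (hHpos j hj))
    _ ≤ q := hq
end

section
/- Let n ≥ 2, c_j = 2^{R_j/B} > 1, H_1 ≥ ... ≥ H_n > 0, total budget q with feasibility q ≥ Σ_{j=1}^n (c_j-1)(Π_{s<j} c_s) H_j. If p is the allocation where all rate constraints hold with equality for j = 1, ..., n-1 and Σ_j p_j = q, then the achieved sum rate equals B log₂(1 + q/((Π_{j=1}^{n-1} c_j) H_n) - Σ_{j=1}^{n-1} (c_j - 1) H_j / ((Π_{l=j}^{n-1} c_l) H_n)) + Σ_{j=1}^{n-1} R_j, where the rate of user j is r_j = B log₂(1 + p_j/(Σ_{k=j+1}^n p_k + H_j)). -/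
open Finset

/-!
With equality in the first `n - 1` rate constraints each of those users gets exactly its demand
`R j`, and the tail powers `T j = ∑_{k ≥ j} p k` obey `T j = c j * T (j + 1) + (c j - 1) * H j`.
Dividing by `∏_{l = j}^{n-1} c l` turns this recursion into a telescoping sum, which gives
`q / ∏_{l < n} c l - ∑_{j < n} (c j - 1) * H j / ∏_{l = j}^{n-1} c l = p n`; so the argument of
the logarithm in the claimed formula is `1 + p n / H n`, the SINR term of the strongest user.
-/

@[to_additive]
lemma prod_Icc_eq_mul_prod_Icc_succ {M : Type*} [CommMonoid M] {a b : ℕ} (h : a ≤ b)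
    (f : ℕ → M) : ∏ k ∈ Icc a b, f k = f a * ∏ k ∈ Icc (a + 1) b, f k := by
  rw [Icc_add_one_left_eq_Ioc, mul_prod_Ioc_eq_prod_Icc h]

lemma mul_logb_one_add_div_of_eq_rpow {B R c p X : ℝ} (hB : B ≠ 0) (hX : X ≠ 0)
    (hc : c = 2 ^ (R / B)) (hp : p = (c - 1) * X) : B * Real.logb 2 (1 + p / X) = R := by
  rw [hp, mul_div_cancel_right₀ _ hX, add_sub_cancel, hc,
    Real.logb_rpow two_pos (by norm_num), mul_div_cancel₀ _ hB]

section Telescoping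

variable {m : ℕ} {c H p : ℕ → ℝ}

lemma sum_Icc_eq_mul_sum_Icc_succ_add {j n : ℕ} (hj : j ≤ n)
    (hp : p j = (c j - 1) * (∑ k ∈ Icc (j + 1) n, p k + H j)) :
    ∑ k ∈ Icc j n, p k = c j * ∑ k ∈ Icc (j + 1) n, p k + (c j - 1) * H j := by
  rw [sum_Icc_eq_add_sum_Icc_succ hj, hp]
  ring

lemma sum_div_prod_sub_sum_eq (hc : ∀ j ∈ Icc 1 m, c j ≠ 0)
    (hp : ∀ j ∈ Icc 1 m, p j = (c j - 1) * (∑ k ∈ Icc (j + 1) (m + 1), p k + H j)) :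
    (∑ k ∈ Icc 1 (m + 1), p k) / ∏ l ∈ Icc 1 m, c l
      - ∑ j ∈ Icc 1 m, (c j - 1) * H j / ∏ l ∈ Icc j m, c l = p (m + 1) := by
  set f : ℕ → ℝ := fun j ↦ (∑ k ∈ Icc j (m + 1), p k) / ∏ l ∈ Icc j m, c l with hf
  have hstep : ∀ j ∈ Icc 1 m, (c j - 1) * H j / ∏ l ∈ Icc j m, c l = f j - f (j + 1) := by
    intro j hj
    have hjm : j ≤ m := (mem_Icc.mp hj).2
    have hcj := hc j hj
    have htail : ∏ l ∈ Icc (j + 1) m, c l ≠ 0 :=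
      prod_ne_zero_iff.mpr fun l hl ↦ hc l (by simp only [mem_Icc] at hl ⊢; omega)
    simp only [hf]
    rw [prod_Icc_eq_mul_prod_Icc_succ hjm,
      sum_Icc_eq_mul_sum_Icc_succ_add (by omega) (hp j hj)]
    field_simp
    ring
  have htelescope : ∑ j ∈ Icc 1 m, (f j - f (j + 1)) = f 1 - f (m + 1) := by
    rw [← Ico_add_one_right_eq_Icc, ← neg_sub (f (m + 1)), ← sum_Ico_sub f (by omega),
      ← sum_neg_distrib]
    simp only [neg_sub]
  have hlast : f (m + 1) = p (m + 1) := by simp [hf]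
  rw [sum_congr rfl hstep, htelescope, hlast, sub_sub_cancel]

end Telescoping

theorem noma_optimal_sum_rate_general (n : ℕ) (hn : 2 ≤ n) (B : ℝ) (hB : 0 < B)
    (R c H p r : ℕ → ℝ) (q : ℝ)
    (hc : ∀ j ∈ Icc 1 n, c j = (2 : ℝ) ^ (R j / B))
    (hHpos : ∀ j ∈ Icc 1 n, 0 < H j)
    (hppos : ∀ j ∈ Icc 1 n, 0 ≤ p j)
    (hsum : ∑ j ∈ Icc 1 n, p j = q)
    (heq : ∀ j, 1 ≤ j → j ≤ n - 1 →
      p j = (c j - 1) * (∑ k ∈ Icc (j + 1) n, p k + H j))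
    (hr : ∀ j ∈ Icc 1 n,
      r j = B * Real.logb 2 (1 + p j / (∑ k ∈ Icc (j + 1) n, p k + H j))) :
    ∑ j ∈ Icc 1 n, r j
      = B * Real.logb 2 (1 + q / ((∏ j ∈ Icc 1 (n - 1), c j) * H n)
          - ∑ j ∈ Icc 1 (n - 1), (c j - 1) * H j / ((∏ l ∈ Icc j (n - 1), c l) * H n))
        + ∑ j ∈ Icc 1 (n - 1), R j := by
  obtain ⟨m, rfl⟩ : ∃ m, n = m + 1 := ⟨n - 1, by omega⟩
  simp only [Nat.add_sub_cancel] at heq ⊢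
  have hmem : ∀ {j}, j ∈ Icc 1 m → j ∈ Icc 1 (m + 1) := fun hj ↦ by
    simp only [mem_Icc] at hj ⊢; omega
  have hrate : ∀ j ∈ Icc 1 m, p j = (c j - 1) * (∑ k ∈ Icc (j + 1) (m + 1), p k + H j) :=
    fun j hj ↦ heq j (mem_Icc.mp hj).1 (mem_Icc.mp hj).2
  have hdemand : ∀ j ∈ Icc 1 m, r j = R j := by
    intro j hj
    have hpow : 0 ≤ ∑ k ∈ Icc (j + 1) (m + 1), p k :=
      sum_nonneg fun k hk ↦ hppos k (by simp only [mem_Icc] at hk ⊢; omega)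
    rw [hr j (hmem hj)]
    exact mul_logb_one_add_div_of_eq_rpow hB.ne' (by linarith [hHpos j (hmem hj)])
      (hc j (hmem hj)) (hrate j hj)
  have hstrongest : r (m + 1) = B * Real.logb 2 (1 + p (m + 1) / H (m + 1)) := by
    simpa using hr (m + 1) (by simp)
  have hsinr : q / ((∏ j ∈ Icc 1 m, c j) * H (m + 1))
      - ∑ j ∈ Icc 1 m, (c j - 1) * H j / ((∏ l ∈ Icc j m, c l) * H (m + 1))
      = p (m + 1) / H (m + 1) := by
    have hcne : ∀ j ∈ Icc 1 m, c j ≠ 0 := fun j hj ↦ by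
      rw [hc j (hmem hj)]; positivity
    simp only [← div_div, ← sum_div, ← sub_div, ← hsum, sum_div_prod_sub_sum_eq hcne hrate]
  rw [sum_Icc_succ_top (by omega), sum_congr rfl hdemand, hstrongest, add_sub_assoc, hsinr]
  ring

theorem noma_optimal_sum_rate (n : ℕ) (hn : 2 ≤ n) (B : ℝ) (hB : 0 < B)
    (R c H p r : ℕ → ℝ) (q : ℝ)
    (hR : ∀ j ∈ Icc 1 n, 0 < R j)
    (hc : ∀ j ∈ Icc 1 n, c j = (2 : ℝ) ^ (R j / B))
    (hHpos : ∀ j ∈ Icc 1 n, 0 < H j)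
    (hHmono : ∀ j k, 1 ≤ j → j ≤ k → k ≤ n → H k ≤ H j)
    (hfeas : ∑ j ∈ Icc 1 n, (c j - 1) * (∏ s ∈ Ico 1 j, c s) * H j ≤ q)
    (hppos : ∀ j ∈ Icc 1 n, 0 ≤ p j)
    (hsum : ∑ j ∈ Icc 1 n, p j = q)
    (heq : ∀ j, 1 ≤ j → j ≤ n - 1 →
      p j = (c j - 1) * (∑ k ∈ Icc (j + 1) n, p k + H j))
    (hr : ∀ j ∈ Icc 1 n,
      r j = B * Real.logb 2 (1 + p j / (∑ k ∈ Icc (j + 1) n, p k + H j))) :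
    ∑ j ∈ Icc 1 n, r j
      = B * Real.logb 2 (1 + q / ((∏ j ∈ Icc 1 (n - 1), c j) * H n)
          - ∑ j ∈ Icc 1 (n - 1), (c j - 1) * H j / ((∏ l ∈ Icc j (n - 1), c l) * H n))
        + ∑ j ∈ Icc 1 (n - 1), R j :=
  noma_optimal_sum_rate_general n hn B hB R c H p r q hc hHpos hppos hsum heq hr
end

section
/- Let D: ℝⁿ_{≥0} → ℝⁿ_{>0} be a standard interference function (positive, monotone, and scalable: λD(q) > D(λq) for λ > 1). If there exists q ≥ 0 with q ≥ D(q), then D has at most one fixed point q* = D(q*). -/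
lemma sif_fp_le (n : ℕ)
    (D : (Fin n → ℝ) → (Fin n → ℝ))
    (hpos : ∀ q, (∀ i, 0 ≤ q i) → ∀ i, 0 < D q i)
    (hmono : ∀ q₁ q₂, (∀ i, 0 ≤ q₂ i) → (∀ i, q₂ i ≤ q₁ i) →
      ∀ i, D q₂ i ≤ D q₁ i)
    (hscale : ∀ (lam : ℝ) (q : Fin n → ℝ), 1 < lam → (∀ i, 0 ≤ q i) →
      ∀ i, D (fun k => lam * q k) i < lam * D q i)
    (q₁ q₂ : Fin n → ℝ) (h1 : ∀ i, 0 ≤ q₁ i) (h2 : ∀ i, 0 ≤ q₂ i)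
    (hf1 : q₁ = D q₁) (hf2 : q₂ = D q₂) : ∀ i, q₂ i ≤ q₁ i := by
  by_contra hcon
  push_neg at hcon
  obtain ⟨i₀, hi₀⟩ := hcon
  have hq1pos : ∀ i, 0 < q₁ i := by
    intro i; rw [hf1]; exact hpos q₁ h1 i
  obtain ⟨j, -, hj⟩ := Finset.exists_max_image Finset.univ (fun i => q₂ i / q₁ i)
    ⟨i₀, Finset.mem_univ i₀⟩
  set lam := q₂ j / q₁ j with hlam
  have hlam1 : 1 < lam := by
    have h := hj i₀ (Finset.mem_univ i₀)
    have : 1 < q₂ i₀ / q₁ i₀ := (one_lt_div (hq1pos i₀)).2 hi₀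
    linarith
  have hle : ∀ k, q₂ k ≤ lam * q₁ k := by
    intro k
    have h := hj k (Finset.mem_univ k)
    have := (div_le_iff₀ (hq1pos k)).1 h
    linarith [this]
  have heq : lam * q₁ j = q₂ j := by
    exact div_mul_cancel₀ _ (hq1pos j).ne'
  have : q₂ j < q₂ j := by
    calc q₂ j = D q₂ j := by rw [← hf2]
      _ ≤ D (fun k => lam * q₁ k) j := hmono _ q₂ h2 hle j
      _ < lam * D q₁ j := hscale lam q₁ hlam1 h1 j
      _ = lam * q₁ j := by rw [← hf1]
      _ = q₂ j := heq
  exact lt_irrefl _ this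

theorem standard_interference_fixed_point_unique (n : ℕ)
    (D : (Fin n → ℝ) → (Fin n → ℝ))
    (hpos : ∀ q, (∀ i, 0 ≤ q i) → ∀ i, 0 < D q i)
    (hmono : ∀ q₁ q₂, (∀ i, 0 ≤ q₂ i) → (∀ i, q₂ i ≤ q₁ i) →
      ∀ i, D q₂ i ≤ D q₁ i)
    (hscale : ∀ (lam : ℝ) (q : Fin n → ℝ), 1 < lam → (∀ i, 0 ≤ q i) →
      ∀ i, D (fun k => lam * q k) i < lam * D q i)
    (hfeas : ∃ q : Fin n → ℝ, (∀ i, 0 ≤ q i) ∧ ∀ i, D q i ≤ q i) :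
    ∀ q₁ q₂ : Fin n → ℝ, (∀ i, 0 ≤ q₁ i) → (∀ i, 0 ≤ q₂ i) →
      q₁ = D q₁ → q₂ = D q₂ → q₁ = q₂ := by
  intro q₁ q₂ h1 h2 hf1 hf2
  funext i
  exact le_antisymm
    (sif_fp_le n D hpos hmono hscale q₂ q₁ h2 h1 hf2 hf1 i)
    (sif_fp_le n D hpos hmono hscale q₁ q₂ h1 h2 hf1 hf2 i)
end

section
/- Let D: ℝⁿ_{≥0} → ℝⁿ_{>0} be a standard interference function with a fixed point q* = D(q*). Then q* is componentwise minimal among all feasible points: every q' ≥ 0 with q' ≥ D(q') satisfies q' ≥ q*. -/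
theorem standard_interference_fixed_point_minimal (n : ℕ)
    (D : (Fin n → ℝ) → (Fin n → ℝ))
    (hpos : ∀ q, (∀ i, 0 ≤ q i) → ∀ i, 0 < D q i)
    (hmono : ∀ q₁ q₂, (∀ i, 0 ≤ q₂ i) → (∀ i, q₂ i ≤ q₁ i) →
      ∀ i, D q₂ i ≤ D q₁ i)
    (hscale : ∀ (lam : ℝ) (q : Fin n → ℝ), 1 < lam → (∀ i, 0 ≤ q i) →
      ∀ i, D (fun k => lam * q k) i < lam * D q i)
    (qstar : Fin n → ℝ) (hqstar0 : ∀ i, 0 ≤ qstar i)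
    (hfix : qstar = D qstar) :
    ∀ q' : Fin n → ℝ, (∀ i, 0 ≤ q' i) → (∀ i, D q' i ≤ q' i) →
      ∀ i, qstar i ≤ q' i := by
  intro q' hq'0 hfeas
  by_contra hcon
  push_neg at hcon
  obtain ⟨j, hj⟩ := hcon
  have hq'pos : ∀ i, 0 < q' i := fun i => lt_of_lt_of_le (hpos q' hq'0 i) (hfeas i)
  have hne : (Finset.univ : Finset (Fin n)).Nonempty := ⟨j, Finset.mem_univ j⟩
  obtain ⟨i₀, -, hmax⟩ := Finset.exists_max_image Finset.univ (fun i => qstar i / q' i) hne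
  set lam := qstar i₀ / q' i₀ with hlam
  have hlam1 : 1 < lam := by
    have h1 : 1 < qstar j / q' j := (one_lt_div (hq'pos j)).mpr hj
    exact lt_of_lt_of_le h1 (hmax j (Finset.mem_univ j))
  have hle : ∀ i, qstar i ≤ lam * q' i := fun i => by
    have := hmax i (Finset.mem_univ i)
    calc qstar i = (qstar i / q' i) * q' i := (div_mul_cancel₀ _ (hq'pos i).ne').symm
    _ ≤ lam * q' i := by
        exact mul_le_mul_of_nonneg_right this (hq'pos i).le
  have h1 : qstar i₀ ≤ D (fun k => lam * q' k) i₀ := by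
    calc qstar i₀ = D qstar i₀ := by rw [← hfix]
    _ ≤ D (fun k => lam * q' k) i₀ := hmono _ _ hqstar0 hle i₀
  have h2 : D (fun k => lam * q' k) i₀ < lam * D q' i₀ := hscale lam q' hlam1 hq'0 i₀
  have h3 : lam * D q' i₀ ≤ lam * q' i₀ :=
    mul_le_mul_of_nonneg_left (hfeas i₀) (by linarith)
  have h4 : lam * q' i₀ = qstar i₀ := div_mul_cancel₀ _ (hq'pos i₀).ne'
  linarith
end
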